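/- The function f(x) = x² is continuous but not lacunarily statistically ward continuous: the sequence (√n) is lacunarily statistically quasi-Cauchy but (n) is not. -/

import Mathlib

open Filter Finset Topology

/-- A sequence `x` converges statistically to `ℓ`. -/
def StatConvTo (x : ℕ → ℝ) (ℓ : ℝ) : Prop :=
  ∀ ε > 0, Tendsto (fun n : ℕ =>
      ((((Finset.range n).filter fun k => ε ≤ |x k - ℓ|).card : ℝ) / (n : ℝ)))
    atTop (𝓝 0)

/-- A sequence is statistically quasi-Cauchy if its difference sequence
converges statistically to `0`. -/
def StatQC (a : ℕ → ℝ) : Prop :=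
  StatConvTo (fun n => a (n + 1) - a n) 0

/-- A lacunary sequence `θ = (k_r)`: strictly increasing, `k 0 = 0`,
and `h_r = k_{r+1} - k_r → ∞`. -/
structure Lacunary where
  k : ℕ → ℕ
  strictMono : StrictMono k
  zero : k 0 = 0
  h_tendsto : Tendsto (fun r => k (r + 1) - k r) atTop atTop

/-- Lacunary statistical convergence of `x` to `ℓ` with respect to `θ`. -/
def LacStatConvTo (θ : Lacunary) (x : ℕ → ℝ) (ℓ : ℝ) : Prop :=
  ∀ ε > 0, Tendsto (fun r : ℕ =>
      ((((Finset.Ioc (θ.k r) (θ.k (r + 1))).filter fun i => ε ≤ |x i - ℓ|).card : ℝ)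
        / ((θ.k (r + 1) - θ.k r : ℕ) : ℝ)))
    atTop (𝓝 0)

/-- A sequence is lacunarily statistically quasi-Cauchy (w.r.t. `θ`). -/
def LacStatQC (θ : Lacunary) (a : ℕ → ℝ) : Prop :=
  LacStatConvTo θ (fun n => a (n + 1) - a n) 0

/-- `liminf q_r > 1` where `q_r = k_{r+1} / k_r`. -/
def LiminfQGtOne (θ : Lacunary) : Prop :=
  ∃ a : ℝ, 1 < a ∧ ∀ᶠ r in atTop, a ≤ (θ.k (r + 1) : ℝ) / (θ.k r : ℝ)

/-- `limsup q_r < ∞` where `q_r = k_{r+1} / k_r`. -/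
def LimsupQLtTop (θ : Lacunary) : Prop :=
  ∃ H : ℝ, ∀ᶠ r in atTop, (θ.k (r + 1) : ℝ) / (θ.k r : ℝ) ≤ H

/-- `A` is lacunarily statistically ward compact w.r.t. `θ`. -/
def LacStatWardCompact (θ : Lacunary) (A : Set ℝ) : Prop :=
  ∀ x : ℕ → ℝ, (∀ n, x n ∈ A) →
    ∃ φ : ℕ → ℕ, StrictMono φ ∧ LacStatQC θ (x ∘ φ)

/-- `f` is lacunarily statistically ward continuous on `A` w.r.t. `θ`. -/
def LacStatWardContOn (θ : Lacunary) (f : ℝ → ℝ) (A : Set ℝ) : Prop :=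
  ∀ x : ℕ → ℝ, (∀ n, x n ∈ A) → LacStatQC θ x → LacStatQC θ (f ∘ x)

/-! The differences √(n+1) − √n tend to 0, so from some block on no index of `I_r` is
exceptional for `(√n)`; the differences of `(√n)² = n` are identically 1, so every index of
every block is exceptional for `(n)` and the ratios are constantly 1. -/

theorem LacStatConvTo.of_tendsto {θ : Lacunary} {x : ℕ → ℝ} {ℓ : ℝ}
    (hx : Tendsto x atTop (𝓝 ℓ)) : LacStatConvTo θ x ℓ := by
  intro ε hε
  obtain ⟨N, hN⟩ := eventually_atTop.mp (Metric.tendsto_nhds.mp hx ε hε)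
  refine tendsto_const_nhds.congr' ?_
  filter_upwards [eventually_ge_atTop N] with r hr
  -- every index `i ∈ (k r, k (r+1)]` exceeds `k r ≥ r ≥ N`
  have hempty : (Ioc (θ.k r) (θ.k (r + 1))).filter (fun i => ε ≤ |x i - ℓ|) = ∅ := by
    refine filter_eq_empty_iff.mpr fun i hi => not_le.mpr ?_
    exact hN i (hr.trans (θ.strictMono.le_apply.trans (mem_Ioc.mp hi).1.le))
  simp [hempty]

theorem not_lacStatConvTo_of_forall_le {θ : Lacunary} {x : ℕ → ℝ} {ℓ ε : ℝ} (hε : 0 < ε)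
    (hx : ∀ n, ε ≤ |x n - ℓ|) : ¬ LacStatConvTo θ x ℓ := by
  intro h
  have hone : ∀ r, ((((Ioc (θ.k r) (θ.k (r + 1))).filter fun i => ε ≤ |x i - ℓ|).card : ℝ)
      / ((θ.k (r + 1) - θ.k r : ℕ) : ℝ)) = 1 := fun r => by
    rw [filter_true_of_mem fun i _ => hx i, Nat.card_Ioc]
    exact div_self (Nat.cast_ne_zero.mpr (Nat.sub_pos_of_lt (θ.strictMono r.lt_succ_self)).ne')
  have := tendsto_nhds_unique ((h ε hε).congr hone) tendsto_const_nhds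
  norm_num at this

theorem tendsto_sqrt_succ_sub_sqrt :
    Tendsto (fun n : ℕ => √((n + 1 : ℕ) : ℝ) - √(n : ℝ)) atTop (𝓝 0) := by
  have hinv : Tendsto (fun n : ℕ => (√((n + 1 : ℕ) : ℝ))⁻¹) atTop (𝓝 0) :=
    tendsto_inv_atTop_zero.comp <| Real.tendsto_sqrt_atTop.comp <|
      tendsto_natCast_atTop_atTop.comp (tendsto_add_atTop_nat 1)
  refine squeeze_zero (fun n => sub_nonneg.mpr (Real.sqrt_le_sqrt (by push_cast; linarith)))
    (fun n => ?_) hinv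
  set s := √((n + 1 : ℕ) : ℝ)
  set t := √(n : ℝ)
  have hs : s ^ 2 = n + 1 := by rw [Real.sq_sqrt (by positivity), Nat.cast_succ]
  have ht : t ^ 2 = n := Real.sq_sqrt (by positivity)
  have hts : t ≤ s := Real.sqrt_le_sqrt (by push_cast; linarith)
  -- `(s - t) s = 1 + t² - t s ≤ 1` because `t ≤ s`
  rw [← one_div, le_div_iff₀ (Real.sqrt_pos.mpr (by positivity))]
  nlinarith [Real.sqrt_nonneg (n : ℝ)]

theorem sq_continuous_not_lacStatWardCont (θ : Lacunary) :
    Continuous (fun x : ℝ => x ^ 2) ∧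
    LacStatQC θ (fun n : ℕ => Real.sqrt n) ∧
    ¬ LacStatQC θ (fun n : ℕ => ((fun x : ℝ => x ^ 2) (Real.sqrt n))) := by
  refine ⟨continuous_pow 2, .of_tendsto tendsto_sqrt_succ_sub_sqrt,
    not_lacStatConvTo_of_forall_le one_pos fun n => ?_⟩
  simp (disch := positivity) [Real.sq_sqrt]
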